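/- arXiv:2208.04925 — 2 statements merged into one kernel-verified Lean document; each statement's English description precedes it below -/
import Mathlib

section
/- Let (V₁, ⟨·,·⟩_h, V₂, B) be a step-two Carnot datum with dim V₁ = m, let g be any inner product on V₂, and let T ∈ V₂, U, V ∈ V₁ satisfy B(U,V) = T. Then ‖T‖_g ≤ √m · (1 + δ(g))^{1/2} · ‖U‖_h · ‖V‖_h. -/
open scoped RealInnerProductSpace

noncomputable section

variable {V₁ : Type*} [NormedAddCommGroup V₁] [InnerProductSpace ℝ V₁] [FiniteDimensional ℝ V₁]
variable {V₂ : Type*} [AddCommGroup V₂] [Module ℝ V₂] [FiniteDimensional ℝ V₂]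

/-- `g` is an inner product (symmetric positive-definite bilinear form) on `V₂`. -/
structure IsInnerProd (g : V₂ →ₗ[ℝ] V₂ →ₗ[ℝ] ℝ) : Prop where
  symm : ∀ s t : V₂, g s t = g t s
  posdef : ∀ t : V₂, t ≠ 0 → 0 < g t t

/-- The norm `‖t‖_g = √(g t t)` associated to a vertical inner product `g`. -/
def gnorm (g : V₂ →ₗ[ℝ] V₂ →ₗ[ℝ] ℝ) (t : V₂) : ℝ := Real.sqrt (g t t)

/-- The Hilbert–Schmidt norm `‖F‖_HS = √(trace(F* F))` of an endomorphism of the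
inner product space `V₁`. -/
def hsNorm (F : V₁ →ₗ[ℝ] V₁) : ℝ :=
  Real.sqrt (LinearMap.trace ℝ V₁ (LinearMap.adjoint F ∘ₗ F))

/-- `J` is the J-operator of the bracket `B` with respect to the vertical inner product `g`:
`⟨J_T U, V⟩_h = g(B(U,V), T)` for all `U V : V₁`, `T : V₂`. -/
def IsJOp (B : V₁ →ₗ[ℝ] V₁ →ₗ[ℝ] V₂) (g : V₂ →ₗ[ℝ] V₂ →ₗ[ℝ] ℝ)
    (J : V₂ → V₁ →ₗ[ℝ] V₁) : Prop :=
  ∀ (T : V₂) (U V : V₁), ⟪J T U, V⟫ = g (B U V) T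

/-- The H-type deviation relative to a fixed vertical inner product `g` with J-operator `J`:
`δ(g) = (dim V₁)^{-1/2} sup { ‖(J_T)² + id‖_HS : ‖T‖_g = 1 }`. -/
def deltaOf (g : V₂ →ₗ[ℝ] V₂ →ₗ[ℝ] ℝ) (J : V₂ → V₁ →ₗ[ℝ] V₁) : ℝ :=
  (Real.sqrt (Module.finrank ℝ V₁))⁻¹ *
    sSup ((fun T => hsNorm (J T ∘ₗ J T + LinearMap.id)) '' {T : V₂ | gnorm g T = 1})

/-- The H-type deviation of a step-two Carnot datum: the infimum of `δ(g)` over all vertical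
inner products `g` on `V₂`. -/
def htypeDeviation (B : V₁ →ₗ[ℝ] V₁ →ₗ[ℝ] V₂) : ℝ :=
  sInf { d : ℝ | ∃ (g : V₂ →ₗ[ℝ] V₂ →ₗ[ℝ] ℝ) (J : V₂ → V₁ →ₗ[ℝ] V₁),
    IsInnerProd g ∧ IsJOp B g J ∧ d = deltaOf g J }

end

/-!
Put on `V₂` the inner product `g`. For `T = B(U,V) ≠ 0` and the unit vector `T' = T / ‖T‖`,
`‖T‖² = g(B(U,V), T) = ‖T‖ ⟨J_{T'} U, V⟩`, so it suffices to bound `‖J_{T'} U‖`.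
Since `B` is alternating, `K = J_{T'}` is skew, hence
`‖K U‖² = ‖U‖² - ⟨(K² + id) U, U⟩ ≤ (1 + ‖K² + id‖_HS) ‖U‖² ≤ (1 + √m δ(g)) ‖U‖²`,
and `1 + √m δ ≤ m (1 + δ)` because `m ≥ 1`.
-/

open scoped RealInnerProductSpace

section HilbertSchmidt

variable {E : Type*} [NormedAddCommGroup E] [InnerProductSpace ℝ E] [FiniteDimensional ℝ E]

theorem hsNorm_eq_sqrt_sum_norm_sq {ι : Type*} [Fintype ι] (e : OrthonormalBasis ι ℝ E)
    (F : E →ₗ[ℝ] E) : hsNorm F = √(∑ i, ‖F (e i)‖ ^ 2) := by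
  simp only [hsNorm, LinearMap.trace_eq_sum_inner _ e, LinearMap.comp_apply,
    LinearMap.adjoint_inner_right, real_inner_self_eq_norm_sq]

theorem norm_apply_le_hsNorm (F : E →ₗ[ℝ] E) (U : E) : ‖F U‖ ≤ hsNorm F * ‖U‖ := by
  let e := stdOrthonormalBasis ℝ E
  calc ‖F U‖ = ‖∑ i, ⟪e i, U⟫ • F (e i)‖ := by
        conv_lhs => rw [← e.sum_repr' U]
        simp only [map_sum, map_smul]
    _ ≤ ∑ i, |⟪e i, U⟫| * ‖F (e i)‖ :=
        (norm_sum_le _ _).trans_eq (by simp only [norm_smul, Real.norm_eq_abs])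
    _ ≤ √(∑ i, |⟪e i, U⟫| ^ 2) * √(∑ i, ‖F (e i)‖ ^ 2) := Real.sum_mul_le_sqrt_mul_sqrt _ _ _
    _ = hsNorm F * ‖U‖ := by
        simp only [sq_abs, e.sum_sq_inner_right, Real.sqrt_sq (norm_nonneg U),
          hsNorm_eq_sqrt_sum_norm_sq e, mul_comm]

theorem hsNorm_le_of_norm_apply_le (F : E →ₗ[ℝ] E) {c : ℝ} (hc : 0 ≤ c)
    (hF : ∀ X, ‖F X‖ ≤ c * ‖X‖) : hsNorm F ≤ √(Module.finrank ℝ E) * c := by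
  let e := stdOrthonormalBasis ℝ E
  calc hsNorm F = √(∑ i, ‖F (e i)‖ ^ 2) := hsNorm_eq_sqrt_sum_norm_sq e F
    _ ≤ √(∑ _i : Fin (Module.finrank ℝ E), c ^ 2) := by
        gcongr with i
        simpa [e.orthonormal.1 i] using hF (e i)
    _ = √(Module.finrank ℝ E) * c := by
        simp [Real.sqrt_mul, Real.sqrt_sq hc]

theorem norm_apply_le_of_skew {K : E →ₗ[ℝ] E} (hK : ∀ X Y, ⟪K X, Y⟫ = -⟪X, K Y⟫) (U : E) :
    ‖K U‖ ≤ √(1 + hsNorm (K ∘ₗ K + LinearMap.id)) * ‖U‖ := by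
  set S : E →ₗ[ℝ] E := K ∘ₗ K + LinearMap.id with hS
  have hsq : ‖K U‖ ^ 2 = ‖U‖ ^ 2 - ⟪S U, U⟫ := by
    rw [← real_inner_self_eq_norm_sq, hK, hS, LinearMap.add_apply, LinearMap.comp_apply,
      LinearMap.id_apply, inner_add_left, real_inner_self_eq_norm_sq, real_inner_comm]
    ring
  have hHS : -⟪S U, U⟫ ≤ hsNorm S * ‖U‖ ^ 2 :=
    calc -⟪S U, U⟫ ≤ ‖S U‖ * ‖U‖ := (neg_le_abs _).trans (abs_real_inner_le_norm _ _)
      _ ≤ hsNorm S * ‖U‖ * ‖U‖ := by grw [norm_apply_le_hsNorm]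
      _ = hsNorm S * ‖U‖ ^ 2 := by ring
  rw [← Real.sqrt_sq (norm_nonneg U), ← Real.sqrt_mul (by unfold hsNorm; positivity)]
  exact Real.le_sqrt_of_sq_le (by linarith)

end HilbertSchmidt

section JOperator

variable {E F : Type*} [NormedAddCommGroup E] [InnerProductSpace ℝ E]
  [NormedAddCommGroup F] [InnerProductSpace ℝ F]
  {B : E →ₗ[ℝ] E →ₗ[ℝ] F} {J : F → E →ₗ[ℝ] E}

theorem inner_J_apply_eq_neg (hAlt : B.IsAlt) (hJ : ∀ T U V, ⟪J T U, V⟫ = ⟪B U V, T⟫)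
    (T : F) (X Y : E) : ⟪J T X, Y⟫ = -⟪X, J T Y⟫ := by
  rw [real_inner_comm (J T Y) X, hJ, hJ, ← hAlt.neg, inner_neg_left]

theorem exists_norm_J_apply_le [FiniteDimensional ℝ E]
    (hJ : ∀ T U V, ⟪J T U, V⟫ = ⟪B U V, T⟫) :
    ∃ C, 0 ≤ C ∧ ∀ T X, ‖J T X‖ ≤ C * ‖T‖ * ‖X‖ := by
  let B' : E →L[ℝ] E →L[ℝ] F :=
    (LinearMap.toContinuousLinearMap.toLinearMap ∘ₗ B).toContinuousLinearMap
  refine ⟨‖B'‖, B'.opNorm_nonneg, fun T X => ?_⟩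
  have hsq : ‖J T X‖ ^ 2 ≤ ‖B'‖ * ‖T‖ * ‖X‖ * ‖J T X‖ :=
    calc ‖J T X‖ ^ 2 = ⟪B X (J T X), T⟫ := by rw [← real_inner_self_eq_norm_sq, hJ]
      _ ≤ ‖B' X (J T X)‖ * ‖T‖ := real_inner_le_norm _ _
      _ ≤ ‖B'‖ * ‖X‖ * ‖J T X‖ * ‖T‖ := by gcongr; exact B'.le_opNorm₂ _ _
      _ = ‖B'‖ * ‖T‖ * ‖X‖ * ‖J T X‖ := by ring
  rcases (norm_nonneg (J T X)).eq_or_lt with h0 | hpos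
  · rw [← h0]
    have := B'.opNorm_nonneg
    positivity
  · exact le_of_mul_le_mul_right (by rwa [← sq]) hpos

theorem exists_hsNorm_J_sq_add_id_le [FiniteDimensional ℝ E]
    (hJ : ∀ T U V, ⟪J T U, V⟫ = ⟪B U V, T⟫) :
    ∃ M, ∀ T, ‖T‖ = 1 → hsNorm (J T ∘ₗ J T + LinearMap.id) ≤ M := by
  obtain ⟨C, hC, hJC⟩ := exists_norm_J_apply_le hJ
  refine ⟨√(Module.finrank ℝ E) * (C * C + 1), fun T hT => ?_⟩
  refine hsNorm_le_of_norm_apply_le _ (by positivity) fun X => ?_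
  have hJT : ∀ Y, ‖J T Y‖ ≤ C * ‖Y‖ := fun Y => by simpa [hT] using hJC T Y
  calc ‖J T (J T X) + X‖ ≤ ‖J T (J T X)‖ + ‖X‖ := norm_add_le _ _
    _ ≤ C * (C * ‖X‖) + ‖X‖ := by grw [hJT, hJT]
    _ = (C * C + 1) * ‖X‖ := by ring

theorem norm_bracket_le_of_norm_J_apply_le (hJ : ∀ T U V, ⟪J T U, V⟫ = ⟪B U V, T⟫)
    {c : ℝ} (hc : 0 ≤ c) (hJc : ∀ T, ‖T‖ = 1 → ∀ X, ‖J T X‖ ≤ c * ‖X‖) (U V : E) :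
    ‖B U V‖ ≤ c * ‖U‖ * ‖V‖ := by
  set T := B U V
  rcases eq_or_ne T 0 with hT0 | hT0
  · rw [hT0, norm_zero]
    positivity
  have hT : 0 < ‖T‖ := norm_pos_iff.2 hT0
  have hunit : ‖‖T‖⁻¹ • T‖ = 1 := by
    rw [norm_smul, norm_inv, norm_norm, inv_mul_cancel₀ hT.ne']
  have hsq : ‖T‖ ^ 2 ≤ ‖T‖ * (c * ‖U‖ * ‖V‖) :=
    calc ‖T‖ ^ 2 = ‖T‖ * ⟪B U V, ‖T‖⁻¹ • T⟫ := by
          rw [real_inner_smul_right, ← mul_assoc, mul_inv_cancel₀ hT.ne', one_mul,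
            real_inner_self_eq_norm_sq]
      _ = ‖T‖ * ⟪J (‖T‖⁻¹ • T) U, V⟫ := by rw [hJ]
      _ ≤ ‖T‖ * (‖J (‖T‖⁻¹ • T) U‖ * ‖V‖) := by gcongr; exact real_inner_le_norm _ _
      _ ≤ ‖T‖ * (c * ‖U‖ * ‖V‖) := by gcongr; exact hJc _ hunit U
  nlinarith

end JOperator

section Deviation

variable {V₁ : Type*} [NormedAddCommGroup V₁] [InnerProductSpace ℝ V₁] [FiniteDimensional ℝ V₁]
  {V₂ : Type*} [AddCommGroup V₂] [Module ℝ V₂]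
  {g : V₂ →ₗ[ℝ] V₂ →ₗ[ℝ] ℝ} {J : V₂ → V₁ →ₗ[ℝ] V₁}

theorem deltaOf_nonneg : 0 ≤ deltaOf g J :=
  mul_nonneg (by positivity) (Real.sSup_nonneg (by rintro _ ⟨T, -, rfl⟩; exact Real.sqrt_nonneg _))

theorem hsNorm_le_sqrt_finrank_mul_deltaOf (hV₁ : 0 < Module.finrank ℝ V₁)
    (hbdd : BddAbove
      ((fun T => hsNorm (J T ∘ₗ J T + LinearMap.id)) '' {T : V₂ | gnorm g T = 1}))
    {T : V₂} (hT : gnorm g T = 1) :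
    hsNorm (J T ∘ₗ J T + LinearMap.id) ≤ √(Module.finrank ℝ V₁) * deltaOf g J := by
  rw [deltaOf, ← mul_assoc, mul_inv_cancel₀ (by positivity), one_mul]
  exact le_csSup hbdd ⟨T, hT, rfl⟩

end Deviation

theorem sqrt_one_add_sqrt_mul_le {m δ : ℝ} (hm : 1 ≤ m) (hδ : 0 ≤ δ) :
    √(1 + √m * δ) ≤ √m * √(1 + δ) := by
  rw [← Real.sqrt_mul (by linarith)]
  have : √m ≤ m := Real.sqrt_le_self_iff.2 (Or.inr hm)
  gcongr
  nlinarith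

abbrev IsInnerProd.core {V₂ : Type*} [AddCommGroup V₂] [Module ℝ V₂]
    {g : V₂ →ₗ[ℝ] V₂ →ₗ[ℝ] ℝ} (hg : IsInnerProd g) : InnerProductSpace.Core ℝ V₂ where
  inner x y := g x y
  conj_inner_symm x y := hg.symm y x
  re_inner_nonneg x := by
    rcases eq_or_ne x 0 with rfl | hx
    · simp
    · exact (hg.posdef x hx).le
  add_left x y z := by simp
  smul_left x y r := by simp
  definite x hx := by
    by_contra h
    exact (hg.posdef x h).ne' hx

theorem gnorm_le_of_bracket_general
    {V₁ : Type*} [NormedAddCommGroup V₁] [InnerProductSpace ℝ V₁] [FiniteDimensional ℝ V₁]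
    {V₂ : Type*} [AddCommGroup V₂] [Module ℝ V₂]
    (m : ℕ) (hm : 1 ≤ m) (hdim₁ : Module.finrank ℝ V₁ = m)
    (B : V₁ →ₗ[ℝ] V₁ →ₗ[ℝ] V₂)
    (hAlt : ∀ U : V₁, B U U = 0)
    (g : V₂ →ₗ[ℝ] V₂ →ₗ[ℝ] ℝ) (hg : IsInnerProd g)
    (J : V₂ → V₁ →ₗ[ℝ] V₁) (hJ : IsJOp B g J)
    (T : V₂) (U V : V₁) (hT : B U V = T) :
    gnorm g T ≤ Real.sqrt m * Real.sqrt (1 + deltaOf g J) * ‖U‖ * ‖V‖ := by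
  let : NormedAddCommGroup V₂ := hg.core.toNormedAddCommGroup
  let : InnerProductSpace ℝ V₂ := InnerProductSpace.ofCore hg.core.toCore
  have hJ' : ∀ T U V, ⟪J T U, V⟫ = ⟪B U V, T⟫ := hJ
  have hnorm : ∀ T : V₂, ‖T‖ = gnorm g T := fun T => by
    rw [norm_eq_sqrt_real_inner]
    rfl
  obtain ⟨M, hM⟩ := exists_hsNorm_J_sq_add_id_le hJ'
  -- `sSup` of a set unbounded above is `0`: `deltaOf` bounds `‖J_S² + id‖_HS` only given this.
  have hbdd : BddAbove
      ((fun T => hsNorm (J T ∘ₗ J T + LinearMap.id)) '' {T : V₂ | gnorm g T = 1}) := by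
    refine ⟨M, ?_⟩
    rintro _ ⟨S, hS, rfl⟩
    exact hM S ((hnorm S).trans hS)
  have hJunit : ∀ S : V₂, ‖S‖ = 1 → ∀ X, ‖J S X‖ ≤ √(1 + √m * deltaOf g J) * ‖X‖ := by
    intro S hS X
    refine (norm_apply_le_of_skew (inner_J_apply_eq_neg hAlt hJ' S) X).trans ?_
    gcongr
    have hHS := hsNorm_le_sqrt_finrank_mul_deltaOf (by omega) hbdd ((hnorm S).symm.trans hS)
    rwa [hdim₁] at hHS
  calc gnorm g T = ‖B U V‖ := by rw [hT, hnorm]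
    _ ≤ √(1 + √m * deltaOf g J) * ‖U‖ * ‖V‖ :=
        norm_bracket_le_of_norm_J_apply_le hJ' (Real.sqrt_nonneg _) hJunit U V
    _ ≤ √m * √(1 + deltaOf g J) * ‖U‖ * ‖V‖ := by
        gcongr
        exact sqrt_one_add_sqrt_mul_le (by exact_mod_cast hm) deltaOf_nonneg

/-- For a step-two Carnot datum, a vertical inner product `g` with J-operator `J`, and
`T = B(U,V)`, one has `‖T‖_g ≤ √m (1 + δ(g))^{1/2} ‖U‖_h ‖V‖_h`. -/
theorem gnorm_le_of_bracket
    {V₁ : Type*} [NormedAddCommGroup V₁] [InnerProductSpace ℝ V₁] [FiniteDimensional ℝ V₁]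
    {V₂ : Type*} [AddCommGroup V₂] [Module ℝ V₂] [FiniteDimensional ℝ V₂]
    (m : ℕ) (hm : 1 ≤ m) (hdim₁ : Module.finrank ℝ V₁ = m)
    (hdim₂ : 1 ≤ Module.finrank ℝ V₂)
    (B : V₁ →ₗ[ℝ] V₁ →ₗ[ℝ] V₂)
    (hAlt : ∀ U : V₁, B U U = 0)
    (hSpan : Submodule.span ℝ {t : V₂ | ∃ U V : V₁, B U V = t} = ⊤)
    (g : V₂ →ₗ[ℝ] V₂ →ₗ[ℝ] ℝ) (hg : IsInnerProd g)
    (J : V₂ → V₁ →ₗ[ℝ] V₁) (hJ : IsJOp B g J)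
    (T : V₂) (U V : V₁) (hT : B U V = T) :
    gnorm g T ≤ Real.sqrt m * Real.sqrt (1 + deltaOf g J) * ‖U‖ * ‖V‖ :=
  gnorm_le_of_bracket_general m hm hdim₁ B hAlt g hg J hJ T U V hT
end

section
/- Let m ≥ 2. Let V₁ = ℝ^m with its standard inner product, let V₂ be the space of real skew-symmetric m×m matrices, and let B : V₁ × V₁ → V₂ be the alternating bilinear map B(u,v) = u vᵀ − v uᵀ. Then the H-type deviation of this step-two Carnot datum equals √((m−2)/m). (This datum models the free Carnot group F_{2,m} of step two and rank m.) -/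
open scoped RealInnerProductSpace

noncomputable section

open scoped RealInnerProductSpace
open Matrix

/-- The space of real skew-symmetric `m × m` matrices, as a submodule. -/
def skewMat (m : ℕ) : Submodule ℝ (Matrix (Fin m) (Fin m) ℝ) where
  carrier := {A | Aᵀ = -A}
  add_mem' := by
    intro a b ha hb
    simp only [Set.mem_setOf_eq] at *
    rw [Matrix.transpose_add, ha, hb, neg_add]
  zero_mem' := by simp
  smul_mem' := by
    intro c A hA
    simp only [Set.mem_setOf_eq] at *
    rw [Matrix.transpose_smul, hA, smul_neg]


/-!
For a skew-adjoint `F` on `ℝ^m` the eigenvalues of `-F²` come in pairs (`F` maps an eigenvector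
to an orthogonal one with the same eigenvalue), so `tr F⁴ ≤ (tr F²)² / 2`, while
`‖F² + 1‖²_HS = tr F⁴ + 2 tr F² + m`. For `g₀(S, T) = ½ tr(Sᵀ T)` the J-operator is `T ↦ -T`
and `‖T‖_{g₀} = 1` means `tr T² = -2`, so `δ(g₀) ≤ √((m - 2) / m)`.

Conversely, for any `g` pick `T` with `g(·, T) = g₀(·, E₁₂ - E₂₁)`; then
`J^g_T = J^{g₀}_{E₁₂ - E₂₁}` squares to minus the projection onto a plane, and after rescaling `T`
to the `g`-unit sphere, `‖J² + 1‖²_HS = m - 2 + 2 (c² - 1)² ≥ m - 2`.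
-/

namespace LinearMap

variable {E : Type*} [NormedAddCommGroup E] [InnerProductSpace ℝ E] [FiniteDimensional ℝ E]
  {F : E →ₗ[ℝ] E}

lemma inner_apply_eq_neg_of_adjoint_eq_neg (hF : adjoint F = -F) (x y : E) :
    ⟪F x, y⟫ = -⟪x, F y⟫ := by
  rw [← adjoint_inner_right, hF, neg_apply, inner_neg_right]

lemma inner_self_apply_eq_zero_of_adjoint_eq_neg (hF : adjoint F = -F) (x : E) :
    ⟪x, F x⟫ = 0 := by
  have h := inner_apply_eq_neg_of_adjoint_eq_neg hF x x
  rw [real_inner_comm] at h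
  linarith

lemma isSymmetric_neg_comp_self (hF : adjoint F = -F) : (-(F ∘ₗ F)).IsSymmetric := by
  intro x y
  simp only [neg_apply, comp_apply, inner_neg_left, inner_neg_right,
    inner_apply_eq_neg_of_adjoint_eq_neg hF, neg_neg]

lemma exists_ne_eigenvalues_eq_of_adjoint_eq_neg (hF : adjoint F = -F) {n : ℕ}
    (hn : Module.finrank ℝ E = n) (i : Fin n)
    (hi : 0 < (isSymmetric_neg_comp_self hF).eigenvalues hn i) :
    ∃ j ≠ i, (isSymmetric_neg_comp_self hF).eigenvalues hn j =
      (isSymmetric_neg_comp_self hF).eigenvalues hn i := by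
  set hM := isSymmetric_neg_comp_self hF
  have hb := hM.apply_eigenvectorBasis hn
  simp only [RCLike.ofReal_real_eq_id, id_eq] at hb
  set b := hM.eigenvectorBasis hn
  set μ := hM.eigenvalues hn
  have hFM : F ∘ₗ (-(F ∘ₗ F)) = (-(F ∘ₗ F)) ∘ₗ F := by
    ext x; simp
  -- `F (b i)` is a `μ i`-eigenvector orthogonal to `b i`, so some other `b j` sees it.
  have hcoeff : ∀ k, (μ k - μ i) * ⟪b k, F (b i)⟫ = 0 := by
    intro k
    have h := hM (b k) (F (b i))
    rw [← comp_apply (-(F ∘ₗ F)), ← hFM, comp_apply, hb, hb, map_smul, inner_smul_left,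
      inner_smul_right] at h
    simp only [conj_trivial] at h
    linear_combination h
  by_contra! hne
  have hzero : F (b i) = 0 := by
    refine InnerProductSpace.ext_inner_left_basis b.toBasis fun k => ?_
    rw [OrthonormalBasis.coe_toBasis, inner_zero_right]
    by_cases hki : k = i
    · rw [hki]; exact inner_self_apply_eq_zero_of_adjoint_eq_neg hF _
    · exact (mul_eq_zero.mp (hcoeff k)).resolve_left (sub_ne_zero.mpr (hne k hki))
  have := hb i
  rw [neg_apply, comp_apply, hzero, map_zero, neg_zero, eq_comm, smul_eq_zero] at this
  exact this.elim hi.ne' (b.toBasis.ne_zero i)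

lemma trace_comp_self_comp_self_le_of_adjoint_eq_neg (hF : adjoint F = -F) :
    trace ℝ E ((F ∘ₗ F) ∘ₗ (F ∘ₗ F)) ≤ trace ℝ E (F ∘ₗ F) ^ 2 / 2 := by
  set hM := isSymmetric_neg_comp_self hF
  have hb := hM.apply_eigenvectorBasis rfl
  simp only [RCLike.ofReal_real_eq_id, id_eq] at hb
  set b := hM.eigenvectorBasis rfl
  set μ := hM.eigenvalues rfl
  have hμ_nonneg : ∀ i, 0 ≤ μ i := fun i =>
    eigenvalue_nonneg_of_nonneg (hM.hasEigenvalue_eigenvalues rfl i) fun x => by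
      have := inner_apply_eq_neg_of_adjoint_eq_neg hF x (F x)
      simp only [RCLike.re_to_real, neg_apply, comp_apply, inner_neg_right]
      linarith [real_inner_self_nonneg (x := F x)]
  have htr : trace ℝ E (F ∘ₗ F) = -∑ i, μ i := by
    rw [trace_eq_sum_inner _ b, ← Finset.sum_neg_distrib]
    refine Finset.sum_congr rfl fun i _ => ?_
    rw [← neg_neg (F ∘ₗ F), neg_apply, inner_neg_right, hb, inner_smul_right,
      b.inner_eq_one, mul_one]
  have htr2 : trace ℝ E ((F ∘ₗ F) ∘ₗ (F ∘ₗ F)) = ∑ i, μ i ^ 2 := by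
    rw [trace_eq_sum_inner _ b]
    refine Finset.sum_congr rfl fun i _ => ?_
    rw [show ((F ∘ₗ F) ∘ₗ (F ∘ₗ F)) (b i) = (-(F ∘ₗ F)) ((-(F ∘ₗ F)) (b i)) by simp, hb,
      map_smul, hb, smul_smul, inner_smul_right, b.inner_eq_one, mul_one, sq]
  have hpair : ∀ i, 2 * μ i ≤ ∑ j, μ j := by
    intro i
    rcases (hμ_nonneg i).eq_or_lt with hi | hi
    · rw [← hi, mul_zero]; exact Finset.sum_nonneg fun j _ => hμ_nonneg j
    obtain ⟨j, hji, hj⟩ := exists_ne_eigenvalues_eq_of_adjoint_eq_neg hF rfl i hi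
    calc 2 * μ i = ∑ k ∈ {i, j}, μ k := by
          rw [Finset.sum_pair hji.symm, show μ j = μ i from hj]; ring
      _ ≤ ∑ k, μ k := Finset.sum_le_sum_of_subset_of_nonneg (Finset.subset_univ _)
          fun k _ _ => hμ_nonneg k
  rw [htr, htr2, neg_sq, sq, Finset.sum_mul, Finset.sum_div]
  refine Finset.sum_le_sum fun i _ => ?_
  nlinarith [hpair i, hμ_nonneg i]

lemma hsNorm_comp_self_add_id_of_adjoint_eq_neg (hF : adjoint F = -F) :
    hsNorm (F ∘ₗ F + id) = √(trace ℝ E ((F ∘ₗ F) ∘ₗ (F ∘ₗ F)) + 2 * trace ℝ E (F ∘ₗ F) +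
      Module.finrank ℝ E) := by
  have hadj : adjoint (F ∘ₗ F + id) = F ∘ₗ F + id := by
    rw [map_add, adjoint_comp, hF, adjoint_id, neg_comp, comp_neg, neg_neg]
  have hsq : (F ∘ₗ F + id) ∘ₗ (F ∘ₗ F + id) =
      (F ∘ₗ F) ∘ₗ (F ∘ₗ F) + (2 : ℝ) • (F ∘ₗ F) + id := by
    ext x; simp [two_smul, add_assoc]
  rw [hsNorm, hadj, hsq, map_add, map_add, map_smul, trace_id, smul_eq_mul]

lemma hsNorm_comp_self_add_id_le_of_adjoint_eq_neg (hF : adjoint F = -F) :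
    hsNorm (F ∘ₗ F + id) ≤ √(trace ℝ E (F ∘ₗ F) ^ 2 / 2 + 2 * trace ℝ E (F ∘ₗ F) +
      Module.finrank ℝ E) := by
  rw [hsNorm_comp_self_add_id_of_adjoint_eq_neg hF]
  gcongr
  exact trace_comp_self_comp_self_le_of_adjoint_eq_neg hF

lemma sqrt_finrank_sub_two_le_hsNorm_smul (hF : adjoint F = -F)
    (h2 : trace ℝ E (F ∘ₗ F) = -2) (h4 : trace ℝ E ((F ∘ₗ F) ∘ₗ (F ∘ₗ F)) = 2) (c : ℝ) :
    √(Module.finrank ℝ E - 2) ≤ hsNorm ((c • F) ∘ₗ (c • F) + id) := by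
  have hcF : adjoint (c • F) = -(c • F) := by rw [map_smul, hF]; simp
  have hsq : (c • F) ∘ₗ (c • F) = c ^ 2 • (F ∘ₗ F) := by
    rw [smul_comp, comp_smul, smul_smul, sq]
  rw [hsNorm_comp_self_add_id_of_adjoint_eq_neg hcF, hsq, smul_comp, comp_smul, smul_smul,
    map_smul, map_smul, h2, h4, smul_eq_mul, smul_eq_mul]
  gcongr
  nlinarith [sq_nonneg (c ^ 2 - 1)]

end LinearMap

lemma LinearMap.exists_abs_apply_self_le_of_norm_eq_one {E : Type*} [NormedAddCommGroup E]
    [NormedSpace ℝ E] [FiniteDimensional ℝ E] (q : E →ₗ[ℝ] E →ₗ[ℝ] ℝ) :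
    ∃ C, ∀ x, ‖x‖ = 1 → |q x x| ≤ C := by
  let q' : E →L[ℝ] E →L[ℝ] ℝ :=
    LinearMap.toContinuousLinearMap (LinearMap.toContinuousLinearMap.toLinearMap ∘ₗ q)
  refine ⟨‖q'‖, fun x hx => ?_⟩
  simpa [q', hx] using q'.le_opNorm₂ x x

section InnerProd

variable {V₂ : Type*} [AddCommGroup V₂] [Module ℝ V₂] {g : V₂ →ₗ[ℝ] V₂ →ₗ[ℝ] ℝ}

lemma gnorm_smul (c : ℝ) (T : V₂) : gnorm g (c • T) = |c| * gnorm g T := by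
  simp only [gnorm, map_smul, LinearMap.smul_apply, smul_eq_mul, ← mul_assoc]
  rw [Real.sqrt_mul (mul_self_nonneg c), Real.sqrt_mul_self_eq_abs]

namespace IsInnerProd

abbrev toCore (hg : IsInnerProd g) : InnerProductSpace.Core ℝ V₂ where
  inner s t := g s t
  conj_inner_symm s t := by simp [hg.symm s t]
  re_inner_nonneg t := by
    rcases eq_or_ne t 0 with rfl | ht
    · simp
    · exact (hg.posdef t ht).le
  add_left s s' t := by simp
  smul_left s t c := by simp
  definite t h := by
    by_contra ht
    exact (hg.posdef t ht).ne' h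

lemma exists_abs_le_of_gnorm_eq_one [FiniteDimensional ℝ V₂] (hg : IsInnerProd g)
    (q : V₂ →ₗ[ℝ] V₂ →ₗ[ℝ] ℝ) : ∃ C, ∀ T, gnorm g T = 1 → |q T T| ≤ C := by
  let _ : NormedAddCommGroup V₂ := InnerProductSpace.Core.toNormedAddCommGroup (cd := hg.toCore)
  let _ : InnerProductSpace ℝ V₂ := InnerProductSpace.ofCore hg.toCore.toCore
  exact q.exists_abs_apply_self_le_of_norm_eq_one

lemma nondegenerate (hg : IsInnerProd g) : g.Nondegenerate :=
  ⟨fun s hs => by_contra fun h => (hg.posdef s h).ne' (hs s),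
    fun t ht => by_contra fun h => (hg.posdef t h).ne' (ht t)⟩

lemma exists_forall_apply_eq [FiniteDimensional ℝ V₂] (hg : IsInnerProd g)
    (ℓ : Module.Dual ℝ V₂) : ∃ T, ∀ S, g S T = ℓ S :=
  ⟨(LinearMap.BilinForm.toDual g hg.nondegenerate).symm ℓ, fun S => by
    rw [hg.symm, LinearMap.BilinForm.apply_toDual_symm_apply]⟩

lemma gnorm_inv_gnorm_smul (hg : IsInnerProd g) {T : V₂} (hT : T ≠ 0) :
    gnorm g ((gnorm g T)⁻¹ • T) = 1 := by
  have hpos : 0 < gnorm g T := Real.sqrt_pos.mpr (hg.posdef T hT)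
  rw [gnorm_smul, abs_inv, abs_of_pos hpos, inv_mul_cancel₀ hpos.ne']

end IsInnerProd

end InnerProd

namespace IsJOp

variable {V₁ : Type*} [NormedAddCommGroup V₁] [InnerProductSpace ℝ V₁]
  {V₂ : Type*} [AddCommGroup V₂] [Module ℝ V₂]
  {B : V₁ →ₗ[ℝ] V₁ →ₗ[ℝ] V₂} {g : V₂ →ₗ[ℝ] V₂ →ₗ[ℝ] ℝ} {J : V₂ → V₁ →ₗ[ℝ] V₁}

lemma map_add (hJ : IsJOp B g J) (S T : V₂) : J (S + T) = J S + J T := by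
  ext u
  refine ext_inner_right ℝ fun v => ?_
  rw [LinearMap.add_apply, inner_add_left, hJ, hJ, hJ, _root_.map_add]

lemma map_smul (hJ : IsJOp B g J) (c : ℝ) (T : V₂) : J (c • T) = c • J T := by
  ext u
  refine ext_inner_right ℝ fun v => ?_
  rw [LinearMap.smul_apply, real_inner_smul_left, hJ, hJ, _root_.map_smul, smul_eq_mul]

def toLinearMap (hJ : IsJOp B g J) : V₂ →ₗ[ℝ] V₁ →ₗ[ℝ] V₁ where
  toFun := J
  map_add' := hJ.map_add
  map_smul' := hJ.map_smul

lemma map_zero (hJ : IsJOp B g J) : J 0 = 0 :=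
  hJ.toLinearMap.map_zero

lemma adjoint_eq_neg [FiniteDimensional ℝ V₁] (hJ : IsJOp B g J)
    (hB : ∀ u v, B v u = -B u v) (T : V₂) : LinearMap.adjoint (J T) = -J T := by
  refine ((LinearMap.eq_adjoint_iff (-J T) (J T)).mpr fun u v => ?_).symm
  rw [LinearMap.neg_apply, inner_neg_left, hJ, real_inner_comm, hJ, hB, map_neg,
    LinearMap.neg_apply, neg_neg]

lemma bddAbove_hsNorm_comp_self_add_id [FiniteDimensional ℝ V₁] [FiniteDimensional ℝ V₂]
    (hg : IsInnerProd g) (hJ : IsJOp B g J) (hB : ∀ u v, B v u = -B u v) :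
    BddAbove ((fun T => hsNorm (J T ∘ₗ J T + LinearMap.id)) '' {T | gnorm g T = 1}) := by
  let q : V₂ →ₗ[ℝ] V₂ →ₗ[ℝ] ℝ :=
    ((LinearMap.mul ℝ (Module.End ℝ V₁)).compl₁₂ hJ.toLinearMap hJ.toLinearMap).compr₂
      (LinearMap.trace ℝ V₁)
  obtain ⟨C, hC⟩ := hg.exists_abs_le_of_gnorm_eq_one q
  refine ⟨√(C ^ 2 / 2 + 2 * C + Module.finrank ℝ V₁), ?_⟩
  rintro _ ⟨T, hT, rfl⟩
  have hqT : |LinearMap.trace ℝ V₁ (J T ∘ₗ J T)| ≤ C := hC T hT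
  refine (LinearMap.hsNorm_comp_self_add_id_le_of_adjoint_eq_neg
    (hJ.adjoint_eq_neg hB T)).trans (Real.sqrt_le_sqrt ?_)
  obtain ⟨hlo, hhi⟩ := abs_le.mp hqT
  nlinarith [sq_le_sq' hlo hhi]

lemma sqrt_div_le_deltaOf [FiniteDimensional ℝ V₁] [FiniteDimensional ℝ V₂]
    (hg : IsInnerProd g) (hJ : IsJOp B g J) (hB : ∀ u v, B v u = -B u v)
    {g₀ : V₂ →ₗ[ℝ] V₂ →ₗ[ℝ] ℝ} {J₀ : V₂ → V₁ →ₗ[ℝ] V₁} (hJ₀ : IsJOp B g₀ J₀) (T₀ : V₂)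
    (h2 : LinearMap.trace ℝ V₁ (J₀ T₀ ∘ₗ J₀ T₀) = -2)
    (h4 : LinearMap.trace ℝ V₁ ((J₀ T₀ ∘ₗ J₀ T₀) ∘ₗ (J₀ T₀ ∘ₗ J₀ T₀)) = 2) :
    √((Module.finrank ℝ V₁ - 2) / Module.finrank ℝ V₁) ≤ deltaOf g J := by
  obtain ⟨T, hT⟩ := hg.exists_forall_apply_eq (g₀.flip T₀)
  have hJT : J T = J₀ T₀ := by
    ext u
    exact ext_inner_right ℝ fun v => by rw [hJ, hT, LinearMap.flip_apply, hJ₀]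
  have hT0 : T ≠ 0 := by
    rintro rfl
    rw [hJ.map_zero] at hJT
    simp [← hJT] at h2
  set c := (gnorm g T)⁻¹
  have hsup : √(Module.finrank ℝ V₁ - 2) ≤
      sSup ((fun T => hsNorm (J T ∘ₗ J T + LinearMap.id)) '' {T | gnorm g T = 1}) :=
    calc √(Module.finrank ℝ V₁ - 2)
        ≤ hsNorm ((c • J₀ T₀) ∘ₗ (c • J₀ T₀) + LinearMap.id) :=
          LinearMap.sqrt_finrank_sub_two_le_hsNorm_smul (hJ₀.adjoint_eq_neg hB T₀) h2 h4 c
      _ = hsNorm (J (c • T) ∘ₗ J (c • T) + LinearMap.id) := by rw [hJ.map_smul, hJT]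
      _ ≤ _ := le_csSup (hJ.bddAbove_hsNorm_comp_self_add_id hg hB)
          ⟨c • T, hg.gnorm_inv_gnorm_smul hT0, rfl⟩
  rw [deltaOf, Real.sqrt_div' _ (Nat.cast_nonneg _), div_eq_inv_mul]
  gcongr

end IsJOp

namespace skewMat

variable {m : ℕ}

lemma transpose_coe (T : skewMat m) : (T : Matrix (Fin m) (Fin m) ℝ)ᵀ = -T := T.prop

-- The factor `1 / 2` is the normalisation at which `δ` attains its infimum.
def innerForm (m : ℕ) : skewMat m →ₗ[ℝ] skewMat m →ₗ[ℝ] ℝ :=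
  LinearMap.mk₂ ℝ (fun S T => (1 / 2) * ((S : Matrix (Fin m) (Fin m) ℝ)ᵀ * T).trace)
    (fun S S' T => by simp [Matrix.add_mul, mul_add])
    (fun c S T => by simp [mul_left_comm])
    (fun S T T' => by simp [mul_add])
    (fun c S T => by simp [mul_left_comm])

lemma innerForm_apply (S T : skewMat m) :
    innerForm m S T = (1 / 2) * ((S : Matrix (Fin m) (Fin m) ℝ)ᵀ * T).trace := rfl

lemma isInnerProd_innerForm : IsInnerProd (innerForm m) where
  symm S T := by
    rw [innerForm_apply, innerForm_apply, ← Matrix.trace_transpose, Matrix.transpose_mul,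
      Matrix.transpose_transpose]
  posdef T hT := by
    have hT' : (T : Matrix (Fin m) (Fin m) ℝ) ≠ 0 := fun h => hT (Subtype.ext h)
    have h :=
      (Matrix.posSemidef_conjTranspose_mul_self (T : Matrix (Fin m) (Fin m) ℝ)).trace_nonneg
    have h' := mt Matrix.trace_conjTranspose_mul_self_eq_zero_iff.mp hT'
    rw [Matrix.conjTranspose_eq_transpose_of_trivial] at h h'
    rw [innerForm_apply]
    positivity

def jOp (m : ℕ) (T : skewMat m) : EuclideanSpace ℝ (Fin m) →ₗ[ℝ] EuclideanSpace ℝ (Fin m) :=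
  Matrix.toEuclideanLin (-(T : Matrix (Fin m) (Fin m) ℝ))

lemma adjoint_jOp (T : skewMat m) : LinearMap.adjoint (jOp m T) = -jOp m T := by
  rw [jOp, ← Matrix.toEuclideanLin_conjTranspose_eq_adjoint,
    Matrix.conjTranspose_eq_transpose_of_trivial, Matrix.transpose_neg, transpose_coe, ← map_neg]

lemma isJOp_jOp {B : EuclideanSpace ℝ (Fin m) →ₗ[ℝ] EuclideanSpace ℝ (Fin m) →ₗ[ℝ] skewMat m}
    (hB : ∀ u v : EuclideanSpace ℝ (Fin m), (B u v : Matrix (Fin m) (Fin m) ℝ) =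
      Matrix.vecMulVec (fun i => u i) (fun i => v i)
        - Matrix.vecMulVec (fun i => v i) (fun i => u i)) :
    IsJOp B (innerForm m) (jOp m) := by
  intro T u v
  rw [innerForm_apply, transpose_coe, hB, jOp, EuclideanSpace.inner_eq_star_dotProduct]
  simp only [Matrix.toLpLin_apply, star_trivial, neg_sub, Matrix.sub_mul, Matrix.trace_sub,
    Matrix.vecMulVec_mul, Matrix.trace_vecMulVec]
  rw [← transpose_coe, Matrix.mulVec_transpose, dotProduct_comm u.ofLp,
    ← Matrix.dotProduct_mulVec, ← Matrix.vecMul_transpose, transpose_coe, Matrix.vecMul_neg,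
    dotProduct_neg]
  ring

lemma trace_toEuclideanLin (A : Matrix (Fin m) (Fin m) ℝ) :
    LinearMap.trace ℝ _ (Matrix.toEuclideanLin A) = A.trace := by
  rw [Matrix.toEuclideanLin, Matrix.toLpLin_eq_toLin,
    LinearMap.trace_eq_matrix_trace ℝ (PiLp.basisFun 2 ℝ (Fin m)), LinearMap.toMatrix_toLin]

lemma jOp_comp_self (T : skewMat m) :
    jOp m T ∘ₗ jOp m T =
      Matrix.toEuclideanLin ((T : Matrix (Fin m) (Fin m) ℝ) * (T : Matrix (Fin m) (Fin m) ℝ)) := by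
  rw [jOp, ← Matrix.toLpLin_mul_same, neg_mul_neg]

lemma trace_jOp_comp_self (T : skewMat m) :
    LinearMap.trace ℝ _ (jOp m T ∘ₗ jOp m T) = -2 * innerForm m T T := by
  rw [jOp_comp_self, trace_toEuclideanLin, innerForm_apply, transpose_coe, Matrix.neg_mul,
    Matrix.trace_neg]
  ring

def rot (i j : Fin m) : skewMat m :=
  ⟨Matrix.single i j 1 - Matrix.single j i 1, by
    change (_ - _)ᵀ = -(_ - _)
    rw [Matrix.transpose_sub, Matrix.transpose_single, Matrix.transpose_single, neg_sub]⟩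

lemma rot_mul_rot {i j : Fin m} (hij : i ≠ j) :
    (rot i j : Matrix (Fin m) (Fin m) ℝ) * (rot i j : Matrix (Fin m) (Fin m) ℝ) =
      -(Matrix.single i i 1 + Matrix.single j j 1) := by
  simp only [rot, mul_sub, sub_mul, ne_eq, hij, hij.symm, not_false_eq_true,
    Matrix.single_mul_single_of_ne, Matrix.single_mul_single_same, mul_one, zero_sub, sub_zero,
    neg_add_rev]
  abel

lemma innerForm_rot_rot {i j : Fin m} (hij : i ≠ j) : innerForm m (rot i j) (rot i j) = 1 := by
  rw [innerForm_apply, transpose_coe, Matrix.neg_mul, rot_mul_rot hij, neg_neg, Matrix.trace_add,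
    Matrix.trace_single_eq_same, Matrix.trace_single_eq_same]
  norm_num

lemma trace_jOp_rot_comp_self {i j : Fin m} (hij : i ≠ j) :
    LinearMap.trace ℝ _ (jOp m (rot i j) ∘ₗ jOp m (rot i j)) = -2 := by
  rw [trace_jOp_comp_self, innerForm_rot_rot hij, mul_one]

lemma trace_jOp_rot_comp_self_sq {i j : Fin m} (hij : i ≠ j) :
    LinearMap.trace ℝ _ ((jOp m (rot i j) ∘ₗ jOp m (rot i j)) ∘ₗ
      (jOp m (rot i j) ∘ₗ jOp m (rot i j))) = 2 := by
  rw [jOp_comp_self, ← Matrix.toLpLin_mul_same, trace_toEuclideanLin, rot_mul_rot hij,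
    neg_mul_neg]
  simp only [mul_add, add_mul, Matrix.single_mul_single_same, mul_one, ne_eq, hij, hij.symm,
    not_false_eq_true, Matrix.single_mul_single_of_ne, add_zero, zero_add, Matrix.trace_add,
    Matrix.trace_single_eq_same]
  norm_num

lemma deltaOf_innerForm_jOp_le : deltaOf (innerForm m) (jOp m) ≤ √(((m : ℝ) - 2) / m) := by
  have hsup : sSup ((fun T => hsNorm (jOp m T ∘ₗ jOp m T + LinearMap.id)) ''
      {T | gnorm (innerForm m) T = 1}) ≤ √((m : ℝ) - 2) := by
    refine Real.sSup_le ?_ (Real.sqrt_nonneg _)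
    rintro _ ⟨T, hT, rfl⟩
    have hTT : innerForm m T T = 1 := Real.sqrt_eq_one.mp hT
    refine (LinearMap.hsNorm_comp_self_add_id_le_of_adjoint_eq_neg (adjoint_jOp T)).trans_eq ?_
    rw [trace_jOp_comp_self, hTT, finrank_euclideanSpace_fin]
    congr 1
    ring
  rw [deltaOf, finrank_euclideanSpace_fin, Real.sqrt_div' _ (Nat.cast_nonneg _), div_eq_inv_mul]
  gcongr

end skewMat

/-- H-type deviation of the free Carnot group `F_{2,m}` of step two and rank `m ≥ 2`:
here `V₁ = ℝ^m`, `V₂` is the space of skew-symmetric `m × m` matrices, and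
`B(u,v) = u vᵀ − v uᵀ`. The deviation equals `√((m−2)/m)`. -/
theorem htypeDeviation_free_step_two
    (m : ℕ) (hm : 2 ≤ m)
    (B : EuclideanSpace ℝ (Fin m) →ₗ[ℝ] EuclideanSpace ℝ (Fin m) →ₗ[ℝ] ↥(skewMat m))
    (hB : ∀ u v : EuclideanSpace ℝ (Fin m),
      (B u v : Matrix (Fin m) (Fin m) ℝ) =
        Matrix.vecMulVec (fun i => u i) (fun i => v i)
          - Matrix.vecMulVec (fun i => v i) (fun i => u i)) :
    htypeDeviation B = Real.sqrt (((m : ℝ) - 2) / (m : ℝ)) := by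
  obtain ⟨i, j, hij⟩ := (Fin.nontrivial_iff_two_le.mpr hm).exists_pair_ne
  have hB_swap : ∀ u v, B v u = -B u v := fun u v => Subtype.ext <| by
    rw [NegMemClass.coe_neg, hB, hB, neg_sub]
  have hJ₀ := skewMat.isJOp_jOp hB
  have hlower : ∀ g J, IsInnerProd g → IsJOp B g J → √(((m : ℝ) - 2) / m) ≤ deltaOf g J :=
    fun g J hg hJ => by
      simpa using hJ.sqrt_div_le_deltaOf hg hB_swap hJ₀ (skewMat.rot i j)
        (skewMat.trace_jOp_rot_comp_self hij) (skewMat.trace_jOp_rot_comp_self_sq hij)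
  have hg₀ := skewMat.isInnerProd_innerForm (m := m)
  refine IsLeast.csInf_eq ⟨⟨_, _, hg₀, hJ₀, le_antisymm (hlower _ _ hg₀ hJ₀)
    skewMat.deltaOf_innerForm_jOp_le⟩, ?_⟩
  rintro _ ⟨g, J, hg, hJ, rfl⟩
  exact hlower g J hg hJ

end
end
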